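/- Let (M, ρ) be a metric space and T = (M, E) a spanning tree. Then T is locally minimal (for every pair of vertices m, m', every edge of the path T[m, m'] has length at most ρ(m, m')) if and only if every edge of T is exact. Consequently, a locally minimal spanning tree of finite length is a minimal spanning tree. -/

import Mathlib

/-!
Deleting an edge `ab` from the tree `T` splits `M` into the side of `a` and the side of `b`, and
the `T`-path between two points passes through `ab` exactly when the points lie on opposite
sides. Local minimality of `T` and exactness of `ab` therefore both say that `ρ(a, b)` is at most
the distance between any two points on opposite sides.

For minimality, let `S` be a connected spanning graph and `ab` an edge of `T` not in `S`. The
`S`-path from `b` to `a` leaves the side of `b` along an edge `xy`, which is not in `T` and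
satisfies `ρ(a, b) ≤ ρ(x, y)` by local minimality. Replacing `xy` by `ab` keeps `S` connected,
does not increase its length and adds an edge of `T`; doing this for each edge of a finite set of
edges of `T` bounds their total length by the length of `S`.
-/

open scoped ENNReal

namespace MSTPaper

variable {M : Type*}

/-- The length of an edge `e` of a graph on a metric space: the extended
distance between its endpoints. -/
noncomputable def edgeLen [MetricSpace M] (e : Sym2 M) : ℝ≥0∞ :=
  Sym2.lift ⟨fun x y => edist x y, fun x y => edist_comm x y⟩ e

/-- The length of a graph: the (possibly infinite) sum of the lengths of its edges. -/
noncomputable def graphLen [MetricSpace M] (G : SimpleGraph M) : ℝ≥0∞ :=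
  ∑' e : G.edgeSet, edgeLen (e : Sym2 M)

/-- The distance between two subsets of a metric space. -/
noncomputable def setDist [MetricSpace M] (A B : Set M) : ℝ≥0∞ :=
  ⨅ x ∈ A, ⨅ y ∈ B, edist x y

/-- A minimal spanning tree on the metric space `M`: a spanning tree of finite
length whose length equals the infimum of lengths of all spanning trees on `M`. -/
def IsMST [MetricSpace M] (T : SimpleGraph M) : Prop :=
  T.IsTree ∧ graphLen T < ⊤ ∧ ∀ T' : SimpleGraph M, T'.IsTree → graphLen T ≤ graphLen T'

/-- An edge `uv` of `G` is exact if its length equals the distance between the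
two connected components obtained by removing it. -/
def ExactEdge [MetricSpace M] (G : SimpleGraph M) (u v : M) : Prop :=
  edist u v = setDist {x | (G.deleteEdges {s(u,v)}).Reachable u x}
                      {x | (G.deleteEdges {s(u,v)}).Reachable v x}

end MSTPaper

namespace SimpleGraph

variable {V : Type*} {G : SimpleGraph V} {a b : V}

lemma mem_edges_of_reachable_deleteEdges (hab : G.IsBridge s(a, b)) {x y : V}
    (hx : (G.deleteEdges {s(a, b)}).Reachable a x)
    (hy : (G.deleteEdges {s(a, b)}).Reachable b y) (w : G.Walk x y) : s(a, b) ∈ w.edges := by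
  by_contra hw
  exact hab (hx.trans ((reachable_deleteEdges_iff_exists_walk.2 ⟨w, hw⟩).trans hy.symm))

lemma Connected.reachable_deleteEdges_or (hG : G.Connected) (a b z : V) :
    (G.deleteEdges {s(a, b)}).Reachable a z ∨ (G.deleteEdges {s(a, b)}).Reachable b z := by
  by_contra! hz
  obtain ⟨w⟩ := hG.preconnected z a
  obtain ⟨d, -, hd, hd'⟩ := w.exists_boundary_dart
    {v | ¬ (G.deleteEdges {s(a, b)}).Reachable a v ∧ ¬ (G.deleteEdges {s(a, b)}).Reachable b v}
    hz (fun h => h.1 .rfl)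
  by_cases hde : d.edge = s(a, b)
  · rcases Sym2.eq_iff.1 hde with ⟨h, -⟩ | ⟨h, -⟩
    · exact hd.1 (h ▸ .rfl)
    · exact hd.2 (h ▸ .rfl)
  · have hadj : (G.deleteEdges {s(a, b)}).Adj d.fst d.snd := deleteEdges_adj.2 ⟨d.adj, hde⟩
    simp only [Set.mem_ofPred_eq, not_and_or, not_not] at hd'
    rcases hd' with h | h
    exacts [hd.1 (h.trans hadj.reachable.symm), hd.2 (h.trans hadj.reachable.symm)]

lemma IsAcyclic.not_reachable_deleteEdges_of_mem_edges (hG : G.IsAcyclic) {u v : V}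
    {p : G.Walk u v} (hp : p.IsPath) (h : s(a, b) ∈ p.edges) :
    ¬ (G.deleteEdges {s(a, b)}).Reachable u v := by
  classical
  rw [reachable_deleteEdges_iff_exists_walk]
  rintro ⟨q, hq⟩
  have hqp : (q.toPath : G.Walk u v) = p :=
    congrArg Subtype.val ((hG.subsingleton_path u v).elim q.toPath ⟨p, hp⟩)
  exact hq (q.edges_toPath_subset_edges (hqp ▸ h))

lemma IsTree.reachable_deleteEdges_of_mem_edges (hG : G.IsTree) {u v : V} {p : G.Walk u v}
    (hp : p.IsPath) (h : s(a, b) ∈ p.edges) :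
    ((G.deleteEdges {s(a, b)}).Reachable a u ∧ (G.deleteEdges {s(a, b)}).Reachable b v) ∨
      ((G.deleteEdges {s(a, b)}).Reachable b u ∧ (G.deleteEdges {s(a, b)}).Reachable a v) := by
  have hsep := hG.isAcyclic.not_reachable_deleteEdges_of_mem_edges hp h
  rcases hG.connected.reachable_deleteEdges_or a b u with hu | hu <;>
    rcases hG.connected.reachable_deleteEdges_or a b v with hv | hv
  exacts [absurd (hu.symm.trans hv) hsep, .inl ⟨hu, hv⟩, .inr ⟨hu, hv⟩,
    absurd (hu.symm.trans hv) hsep]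

end SimpleGraph

namespace MSTPaper

open SimpleGraph
open scoped Finset

variable {M : Type*}

section

variable [MetricSpace M]

lemma setDist_le_edist {A B : Set M} {x y : M} (hx : x ∈ A) (hy : y ∈ B) :
    setDist A B ≤ edist x y :=
  iInf₂_le_of_le x hx (iInf₂_le y hy)

lemma le_setDist {A B : Set M} {d : ℝ≥0∞} (h : ∀ x ∈ A, ∀ y ∈ B, d ≤ edist x y) :
    d ≤ setDist A B :=
  le_iInf₂ fun x hx => le_iInf₂ fun y hy => h x hx y hy

lemma graphLen_eq_add_of_edgeSet_eq_insert {G H : SimpleGraph M} {e : Sym2 M}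
    (h : G.edgeSet = insert e H.edgeSet) (he : e ∉ H.edgeSet) :
    graphLen G = edgeLen e + graphLen H := by
  unfold graphLen
  rw [h, Set.insert_eq, ENNReal.summable.tsum_union_disjoint
    (Set.disjoint_singleton_left.2 he) ENNReal.summable, tsum_singleton]

lemma sum_edgeLen_le_graphLen {G : SimpleGraph M} {F : Finset (Sym2 M)}
    (hF : ∀ f ∈ F, f ∈ G.edgeSet) : ∑ f ∈ F, edgeLen f ≤ graphLen G := by
  classical
  calc ∑ f ∈ F, edgeLen f = ∑ f ∈ F, G.edgeSet.indicator edgeLen f :=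
        Finset.sum_congr rfl fun f hf => (Set.indicator_of_mem (hF f hf) _).symm
    _ ≤ ∑' f, G.edgeSet.indicator edgeLen f := ENNReal.sum_le_tsum F
    _ = graphLen G := (tsum_subtype G.edgeSet edgeLen).symm

lemma graphLen_le_of_forall_sum_le {G : SimpleGraph M} {c : ℝ≥0∞}
    (h : ∀ F : Finset (Sym2 M), (∀ f ∈ F, f ∈ G.edgeSet) → ∑ f ∈ F, edgeLen f ≤ c) :
    graphLen G ≤ c := by
  rw [graphLen, ENNReal.tsum_eq_iSup_sum]
  refine iSup_le fun F => ?_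
  have hF := h (F.map (Function.Embedding.subtype _)) fun f hf => by
    obtain ⟨e, -, rfl⟩ := Finset.mem_map.1 hf
    exact e.2
  rwa [Finset.sum_map] at hF

def IsLocallyMinimal (T : SimpleGraph M) : Prop :=
  ∀ m m' : M, ∀ p : T.Path m m', ∀ a b : M, s(a,b) ∈ p.1.edges → edist a b ≤ edist m m'

variable {T : SimpleGraph M} {a b : M}

lemma IsLocallyMinimal.edist_le_of_reachable (hloc : IsLocallyMinimal T) (hT : T.IsTree)
    (hab : T.Adj a b) {x y : M} (hx : (T.deleteEdges {s(a, b)}).Reachable a x)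
    (hy : (T.deleteEdges {s(a, b)}).Reachable b y) : edist a b ≤ edist x y := by
  obtain ⟨p, hp⟩ := hT.connected.exists_isPath x y
  exact hloc x y ⟨p, hp⟩ a b <| mem_edges_of_reachable_deleteEdges
    (isAcyclic_iff_forall_adj_isBridge.1 hT.isAcyclic hab) hx hy p

lemma IsLocallyMinimal.exactEdge (hloc : IsLocallyMinimal T) (hT : T.IsTree) (hab : T.Adj a b) :
    ExactEdge T a b :=
  le_antisymm (le_setDist fun _ hx _ hy => hloc.edist_le_of_reachable hT hab hx hy)
    (setDist_le_edist (Reachable.refl a) (Reachable.refl b))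

lemma isLocallyMinimal_of_forall_exactEdge (hT : T.IsTree)
    (h : ∀ a b, T.Adj a b → ExactEdge T a b) : IsLocallyMinimal T := by
  intro m m' p a b hab
  rw [h a b (p.1.adj_of_mem_edges hab)]
  rcases hT.reachable_deleteEdges_of_mem_edges p.2 hab with ⟨hm, hm'⟩ | ⟨hm, hm'⟩
  · exact setDist_le_edist hm hm'
  · exact edist_comm m m' ▸ setDist_le_edist hm' hm

lemma IsLocallyMinimal.exists_crossing_edge (hloc : IsLocallyMinimal T) (hT : T.IsTree)
    (hab : T.Adj a b) {S : SimpleGraph M} (hS : S.Connected) (habS : ¬ S.Adj a b) :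
    ∃ x y, S.Adj x y ∧ s(x, y) ∉ T.edgeSet ∧ edist a b ≤ edist x y ∧
      ¬ (S ⊔ edge a b).IsBridge s(x, y) := by
  have hbr : T.IsBridge s(a, b) := isAcyclic_iff_forall_adj_isBridge.1 hT.isAcyclic hab
  obtain ⟨p, hp⟩ := hS.exists_isPath b a
  obtain ⟨d, hd, hy, hx⟩ := p.exists_boundary_dart
    {z | ¬ (T.deleteEdges {s(a, b)}).Reachable a z} (fun h => hbr h) (fun h => h .rfl)
  simp only [Set.mem_ofPred_eq, not_not] at hx hy
  have hy' := (hT.connected.reachable_deleteEdges_or a b d.fst).resolve_left hy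
  refine ⟨d.snd, d.fst, d.adj.symm, fun hT' => ?_,
    hloc.edist_le_of_reachable hT hab hx hy', fun hbr' => ?_⟩
  · have := mem_edges_of_reachable_deleteEdges hbr hx hy' (Adj.toWalk hT')
    rw [hT'.edges_toWalk, List.mem_singleton] at this
    exact habS (by rw [← mem_edgeSet, this]; exact d.adj.symm)
  -- `d` lies on the cycle formed by the new edge `ab` and the `S`-path from `b` to `a`
  have hc := Path.cons_isCycle ⟨p.mapLe le_sup_left, hp.mapLe _⟩
    (show (S ⊔ edge a b).Adj a b from .inr (edge_adj .. |>.2 ⟨.inl ⟨rfl, rfl⟩, hab.ne⟩))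
    (by simpa [Walk.edges_mapLe_eq_edges] using fun h => habS (p.adj_of_mem_edges h))
  refine hbr'.notMem_edges_of_isCycle hc ?_
  rw [Walk.edges_cons, Walk.edges_mapLe_eq_edges, Sym2.eq_swap (a := d.snd)]
  exact List.mem_cons_of_mem _ (List.mem_map_of_mem (f := Dart.edge) hd)

lemma IsLocallyMinimal.exists_exchange (hloc : IsLocallyMinimal T) (hT : T.IsTree)
    (hab : T.Adj a b) {S : SimpleGraph M} (hS : S.Connected) (habS : ¬ S.Adj a b) :
    ∃ S' : SimpleGraph M, S'.Connected ∧ graphLen S' ≤ graphLen S ∧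
      S'.edgeSet ∩ T.edgeSet = insert s(a, b) (S.edgeSet ∩ T.edgeSet) := by
  obtain ⟨x, y, hxy, hxyT, hle, hbr⟩ := hloc.exists_crossing_edge hT hab hS habS
  set H := S ⊔ edge a b
  have hH : H.edgeSet = insert s(a, b) S.edgeSet := by
    rw [edgeSet_sup, edgeSet_edge,
      sdiff_eq_left.2 (Set.disjoint_singleton_left.2 (by simpa using hab.ne)), Set.union_singleton]
  have hxyH : s(x, y) ∈ H.edgeSet := hH ▸ Set.mem_insert_of_mem _ hxy
  refine ⟨H.deleteEdges {s(x, y)},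
    (hS.mono le_sup_left).connected_delete_edge_of_not_isBridge hbr, ?_, ?_⟩
  · have hS' : H.edgeSet = insert s(x, y) (H.deleteEdges {s(x, y)}).edgeSet := by
      rw [edgeSet_deleteEdges, Set.insert_sdiff_singleton, Set.insert_eq_of_mem hxyH]
    refine ENNReal.le_of_add_le_add_left (edist_ne_top x y) ?_
    calc edist x y + graphLen (H.deleteEdges {s(x, y)})
        = graphLen H := (graphLen_eq_add_of_edgeSet_eq_insert hS' (by simp)).symm
      _ = edist a b + graphLen S := graphLen_eq_add_of_edgeSet_eq_insert hH habS
      _ ≤ edist x y + graphLen S := add_le_add_left hle _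
  · rw [edgeSet_deleteEdges, hH]
    ext f
    simp only [Set.mem_inter_iff, Set.mem_sdiff, Set.mem_insert_iff, Set.mem_singleton_iff]
    constructor
    · rintro ⟨⟨hf, -⟩, hfT⟩
      exact hf.imp_right (⟨·, hfT⟩)
    · rintro (rfl | ⟨hfS, hfT⟩)
      · exact ⟨⟨.inl rfl, fun h => hxyT (h ▸ hab)⟩, hab⟩
      · exact ⟨⟨.inr hfS, fun h => hxyT (h ▸ hfT)⟩, hfT⟩

lemma IsLocallyMinimal.sum_le_graphLen (hloc : IsLocallyMinimal T) (hT : T.IsTree)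
    {F : Finset (Sym2 M)} (hF : ∀ f ∈ F, f ∈ T.edgeSet) {S : SimpleGraph M}
    (hS : S.Connected) : ∑ f ∈ F, edgeLen f ≤ graphLen S := by
  classical
  induction hn : #{f ∈ F | f ∉ S.edgeSet} generalizing S with
  | zero =>
    refine sum_edgeLen_le_graphLen fun f hf => ?_
    simpa [hf] using Finset.filter_eq_empty_iff.1 (Finset.card_eq_zero.1 hn) hf
  | succ n ih =>
    obtain ⟨e, he⟩ : {f ∈ F | f ∉ S.edgeSet}.Nonempty := Finset.card_pos.1 (by omega)
    obtain ⟨heF, heS⟩ := Finset.mem_filter.1 he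
    obtain ⟨a, b⟩ := e
    obtain ⟨S', hS', hlen, hS'T⟩ := hloc.exists_exchange hT (hF _ heF) hS heS
    have hmiss : {f ∈ F | f ∉ S'.edgeSet} = {f ∈ F | f ∉ S.edgeSet}.erase s(a, b) := by
      ext f
      have hf := Set.ext_iff.1 hS'T f
      have hfT := hF f
      simp only [Set.mem_inter_iff, Set.mem_insert_iff] at hf
      simp only [Finset.mem_filter, Finset.mem_erase]
      tauto
    refine (ih hS' ?_).trans hlen
    rw [hmiss, Finset.card_erase_of_mem he, hn, Nat.add_sub_cancel]

end

/-- A spanning tree is locally minimal (no edge on the path between two vertices is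
longer than the distance between them) iff all its edges are exact; consequently, a
locally minimal spanning tree of finite length is a minimal spanning tree. -/
theorem locally_minimal_iff_exact [MetricSpace M] (T : SimpleGraph M) (hT : T.IsTree) :
    ((∀ m m' : M, ∀ p : T.Path m m', ∀ a b : M,
        s(a,b) ∈ p.1.edges → edist a b ≤ edist m m') ↔
      (∀ a b : M, T.Adj a b → ExactEdge T a b)) ∧
    ((graphLen T < ⊤ ∧ ∀ m m' : M, ∀ p : T.Path m m', ∀ a b : M,
        s(a,b) ∈ p.1.edges → edist a b ≤ edist m m') → IsMST T) := by
  refine ⟨⟨fun hloc _ _ hab => IsLocallyMinimal.exactEdge hloc hT hab,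
    isLocallyMinimal_of_forall_exactEdge hT⟩, ?_⟩
  rintro ⟨hfin, hloc⟩
  exact ⟨hT, hfin, fun S hS => graphLen_le_of_forall_sum_le fun F hF =>
    IsLocallyMinimal.sum_le_graphLen hloc hT hF hS.connected⟩

end MSTPaper
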